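/- arXiv:1411.6834 — 4 statements merged into one kernel-verified Lean document; each statement's English description precedes it below -/
import Mathlib

section
/- For α > 0, let σ₀ = √(5/3 + 5α/3 - β/3 - (2/3)√(2 + 4α - 4α² + 2(1+α)β)) with β = √(1 + 2α + 4α²), and b = (2/3)(√(6(α+1) - 2σ₀²) - σ₀/2). Then the function f(x) = (1/π)√((b-x)(x-σ₀)) (1 + (α/√(σ₀ b))·(1/x)) on [σ₀, b] is nonnegative and integrates to 1, i.e. defines a probability density on [σ₀, b]. -/
/-!
Write `P x = (b - x) * (x - σ₀)`. The two semicircle integrals `∫ √P = π (b - σ₀)² / 8` and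
`∫ √P / x = π ((σ₀ + b) / 2 - √(σ₀ b))` give total mass
`(b - σ₀)² / 8 + α (σ₀ + b) / (2 √(σ₀ b)) - α`.
The explicit endpoints satisfy `σ₀ b = β - 1 - α` and `3 (σ₀² + b²) + 2 σ₀ b = 8 (1 + α)`, hence
`(σ₀ + b)² = 4 (1 + α + β) / 3` and `σ₀ b (σ₀ + b)² = 4 (β² - (1 + α)²) / 3 = 4 α²`, that is
`(σ₀ + b) √(σ₀ b) = 2 α`. Substituting, the mass is `(3 σ₀² + 3 b² + 2 σ₀ b) / 8 - α = 1`.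
-/

open MeasureTheory Real

theorem HasDerivAt.arcsin_of_one_sub_sq_eq {g : ℝ → ℝ} {g' r x : ℝ} (hg : HasDerivAt g g' x)
    (hr : 0 < r) (h : 1 - g x ^ 2 = r ^ 2) : HasDerivAt (fun y => arcsin (g y)) (g' / r) x := by
  have hlt : g x ^ 2 < 1 := by nlinarith
  have hne₁ : g x ≠ -1 := by intro heq; rw [heq] at hlt; norm_num at hlt
  have hne₂ : g x ≠ 1 := by intro heq; rw [heq] at hlt; norm_num at hlt
  have := (hasDerivAt_arcsin hne₁ hne₂).comp x hg
  rwa [h, sqrt_sq hr.le, one_div, ← div_eq_inv_mul] at this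

section Semicircle

variable {s b x : ℝ}

theorem sqrt_sub_mul_sub_eq (hsb : s < b) (x : ℝ) :
    √((b - x) * (x - s)) = (b - s) / 2 * √(1 - (x / ((b - s) / 2) - (s + b) / (b - s)) ^ 2) := by
  have hbs : b - s ≠ 0 := by linarith
  have hh : 0 < (b - s) / 2 := by linarith
  rw [show (b - x) * (x - s) = ((b - s) / 2) ^ 2 * (1 - (x / ((b - s) / 2) - (s + b) / (b - s)) ^ 2)
    by field_simp; ring, sqrt_mul (sq_nonneg _), sqrt_sq hh.le]

theorem integral_sqrt_sub_mul_sub (hsb : s < b) :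
    ∫ x in s..b, √((b - x) * (x - s)) = π * (b - s) ^ 2 / 8 := by
  have hbs : b - s ≠ 0 := by linarith
  have hh : (b - s) / 2 ≠ 0 := by linarith
  simp_rw [sqrt_sub_mul_sub_eq hsb]
  rw [intervalIntegral.integral_const_mul,
    intervalIntegral.integral_comp_div_sub (fun t => √(1 - t ^ 2)) hh]
  have e₁ : s / ((b - s) / 2) - (s + b) / (b - s) = -1 := by field_simp; ring
  have e₂ : b / ((b - s) / 2) - (s + b) / (b - s) = 1 := by field_simp; ring
  rw [e₁, e₂, integral_sqrt_one_sub_sq, smul_eq_mul]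
  ring

theorem hasDerivAt_sqrt_sub_mul_sub (hsx : s < x) (hxb : x < b) :
    HasDerivAt (fun y => √((b - y) * (y - s)))
      ((b + s - 2 * x) / (2 * √((b - x) * (x - s)))) x := by
  have hP : HasDerivAt (fun y => (b - y) * (y - s)) (b + s - 2 * x) x :=
    ((hasDerivAt_id' x).const_sub b).mul ((hasDerivAt_id' x).sub_const s) |>.congr_deriv (by ring)
  exact hP.sqrt (mul_pos (by linarith) (by linarith)).ne'

theorem hasDerivAt_arcsin_affine (hsx : s < x) (hxb : x < b) :
    HasDerivAt (fun y => arcsin ((2 * y - s - b) / (b - s))) (1 / √((b - x) * (x - s))) x := by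
  have hP : 0 < (b - x) * (x - s) := mul_pos (by linarith) (by linarith)
  have hR := sq_sqrt hP.le
  have hbs : b - s ≠ 0 := by linarith
  have hg : HasDerivAt (fun y => (2 * y - s - b) / (b - s)) (2 / (b - s)) x :=
    (((hasDerivAt_id' x).const_mul 2).sub_const s |>.sub_const b).div_const (b - s)
      |>.congr_deriv (by ring)
  convert hg.arcsin_of_one_sub_sq_eq (r := 2 * √((b - x) * (x - s)) / (b - s))
    (div_pos (by positivity) (by linarith)) ?_ using 1
  · field_simp
  · simp only [div_pow, mul_pow, hR]; field_simp; ring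

theorem hasDerivAt_arcsin_mobius (hs : 0 < s) (hsx : s < x) (hxb : x < b) :
    HasDerivAt (fun y => arcsin (((s + b) * y - 2 * s * b) / ((b - s) * y)))
      (√(s * b) / (x * √((b - x) * (x - s)))) x := by
  have hx : 0 < x := hs.trans hsx
  have hb : 0 < b := hx.trans hxb
  have hP : 0 < (b - x) * (x - s) := mul_pos (by linarith) (by linarith)
  have hR := sq_sqrt hP.le
  have hv := sq_sqrt (mul_pos hs hb).le
  have hbs : 0 < b - s := by linarith
  have hg : HasDerivAt (fun y => ((s + b) * y - 2 * s * b) / ((b - s) * y))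
      (2 * s * b / ((b - s) * x ^ 2)) x :=
    (((hasDerivAt_id' x).const_mul (s + b)).sub_const (2 * s * b)).div
      ((hasDerivAt_id' x).const_mul (b - s)) (by positivity) |>.congr_deriv (by field_simp; ring)
  convert hg.arcsin_of_one_sub_sq_eq (r := 2 * √(s * b) * √((b - x) * (x - s)) / ((b - s) * x))
    (by positivity) ?_ using 1
  · rw [eq_div_iff (by positivity)]; field_simp; rw [hv]
  · simp only [div_pow, mul_pow, hR, hv]; field_simp; ring

theorem integral_sqrt_sub_mul_sub_div (hs : 0 < s) (hsb : s < b) :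
    ∫ x in s..b, √((b - x) * (x - s)) / x = π * ((s + b) / 2 - √(s * b)) := by
  have hb : 0 < b := hs.trans hsb
  have hbs : b - s ≠ 0 := by linarith
  have hne : ∀ y ∈ Set.Icc s b, y ≠ 0 := fun y hy => (hs.trans_le hy.1).ne'
  have hden : ∀ y ∈ Set.Icc s b, (b - s) * y ≠ 0 := fun y hy => mul_ne_zero hbs (hne y hy)
  set v := √(s * b) with hv_def
  have hv : v ^ 2 = s * b := sq_sqrt (mul_pos hs hb).le
  have hderiv : ∀ x ∈ Set.Ioo s b, HasDerivAt (fun y => √((b - y) * (y - s))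
      + (s + b) / 2 * arcsin ((2 * y - s - b) / (b - s))
      - v * arcsin (((s + b) * y - 2 * s * b) / ((b - s) * y)))
      (√((b - x) * (x - s)) / x) x := by
    rintro x ⟨hsx, hxb⟩
    have hx : 0 < x := hs.trans hsx
    have hR := sq_sqrt (mul_pos (by linarith : 0 < b - x) (by linarith : 0 < x - s)).le
    refine ((hasDerivAt_sqrt_sub_mul_sub hsx hxb).add
      ((hasDerivAt_arcsin_affine hsx hxb).const_mul _)).sub
      ((hasDerivAt_arcsin_mobius hs hsx hxb).const_mul _) |>.congr_deriv ?_
    rw [← hv_def]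
    field_simp
    linear_combination (-2) * hR - 2 * hv
  rw [intervalIntegral.integral_eq_sub_of_hasDerivAt_of_le hsb.le
    (by fun_prop (disch := exact hden)) hderiv
    (ContinuousOn.intervalIntegrable (by
      rw [Set.uIcc_of_le hsb.le]; fun_prop (disch := exact hne)))]
  have e₁ : (2 * b - s - b) / (b - s) = 1 := by field_simp; ring
  have e₂ : (2 * s - s - b) / (b - s) = -1 := by field_simp; ring
  have e₃ : ((s + b) * b - 2 * s * b) / ((b - s) * b) = 1 := by field_simp; ring
  have e₄ : ((s + b) * s - 2 * s * b) / ((b - s) * s) = -1 := by field_simp; ring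
  simp only [e₁, e₂, e₃, e₄, sub_self, zero_mul, mul_zero, sqrt_zero, arcsin_one, arcsin_neg_one]
  ring

end Semicircle

noncomputable def genHermiteDensity (α s b x : ℝ) : ℝ :=
  1 / π * √((b - x) * (x - s)) * (1 + α / √(s * b) * (1 / x))

theorem genHermiteDensity_nonneg {α s b x : ℝ} (hα : 0 ≤ α) (hs : 0 < s) (hx : s ≤ x) :
    0 ≤ genHermiteDensity α s b x := by
  have : 0 ≤ α / √(s * b) * (1 / x) := by have := hs.trans_le hx; positivity
  unfold genHermiteDensity
  positivity

theorem integral_genHermiteDensity {α s b : ℝ} (hs : 0 < s) (hsb : s < b)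
    (hmoment : 3 * (b ^ 2 + s ^ 2) + 2 * b * s = 8 * (1 + α))
    (hmean : (s + b) * √(s * b) = 2 * α) :
    ∫ x in s..b, genHermiteDensity α s b x = 1 := by
  have hv : 0 < √(s * b) := sqrt_pos.2 (mul_pos hs (hs.trans hsb))
  have hne : ∀ y ∈ Set.uIcc s b, y ≠ 0 := fun y hy =>
    (hs.trans_le (Set.uIcc_of_le hsb.le ▸ hy).1).ne'
  have hint : IntervalIntegrable (fun x => √((b - x) * (x - s)) / x) volume s b :=
    ContinuousOn.intervalIntegrable (by fun_prop (disch := exact hne))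
  have hsplit : ∀ x, genHermiteDensity α s b x
      = 1 / π * (√((b - x) * (x - s)) + α / √(s * b) * (√((b - x) * (x - s)) / x)) := by
    intro x; unfold genHermiteDensity; ring
  simp_rw [hsplit]
  rw [intervalIntegral.integral_const_mul, intervalIntegral.integral_add
    ((by fun_prop : Continuous fun x => √((b - x) * (x - s))).intervalIntegrable s b)
    (hint.const_mul _), intervalIntegral.integral_const_mul, integral_sqrt_sub_mul_sub hsb,
    integral_sqrt_sub_mul_sub_div hs hsb]
  generalize √(s * b) = v at hv hmean ⊢
  field_simp
  linear_combination 2 * v * hmoment - 4 * (s + b) * hmean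

/-- `p` is the smaller root of `9 p² - 6 (5 + 5α - β) p + 9 (β - 1 - α)²`, whose discriminant
is `(12 q)²`; the last conjunct is that equation, rearranged. -/
theorem genHermite_sigma_sq_spec {α β q p : ℝ} (hα : 0 < α) (hβ₀ : 0 ≤ β)
    (hβ : β ^ 2 = 1 + 2 * α + 4 * α ^ 2) (hq₀ : 0 ≤ q)
    (hq : q ^ 2 = 2 + 4 * α - 4 * α ^ 2 + 2 * (1 + α) * β) (hp : 3 * p = 5 + 5 * α - β - 2 * q) :
    0 < p ∧ p < 1 + α ∧ 0 ≤ p + 3 * β - 3 - 3 * α ∧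
      4 * p * (6 * (α + 1) - 2 * p) = (p + 3 * β - 3 - 3 * α) ^ 2 := by
  have hβ_gt : 1 + α < β := by nlinarith
  have hβ_ge : 2 * α ≤ β := by nlinarith
  have hβ_lt : β < 5 + 5 * α := by nlinarith
  have hsq₁ : (5 + 5 * α - β) ^ 2 - (2 * q) ^ 2 = 9 * (β - 1 - α) ^ 2 := by
    linear_combination (-8) * hβ - 4 * hq
  have hsq₂ : (2 + 2 * α - β) ^ 2 - (2 * q) ^ 2
      = -(3 + 6 * α - 24 * α ^ 2 + 12 * (1 + α) * β) := by
    linear_combination hβ - 4 * hq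
  have hsq₃ : (4 * β - 2 - 2 * α) ^ 2 - q ^ 2 = 18 * β * (β - 1 - α) := by
    linear_combination (-2) * hβ - hq
  have h₁ : 2 * q < 5 + 5 * α - β :=
    lt_of_pow_lt_pow_left₀ 2 (by linarith) (by nlinarith [pow_pos (sub_pos.2 hβ_gt) 2])
  have h₂ : 2 + 2 * α - β < 2 * q := lt_of_pow_lt_pow_left₀ 2 (by positivity) (by nlinarith)
  have h₃ : q ≤ 4 * β - 2 - 2 * α :=
    le_of_pow_le_pow_left₀ two_ne_zero (by linarith) (by nlinarith)
  refine ⟨by linarith, by linarith, by linarith, ?_⟩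
  linear_combination hsq₁ - (3 * p - (5 + 5 * α - β) - 2 * q) * hp

theorem genHermite_sigma_spec {α β σ₀ : ℝ} (hα : 0 < α) (hβ : β = √(1 + 2 * α + 4 * α ^ 2))
    (hσ : σ₀ = √(5/3 + 5*α/3 - β/3 - (2/3) * √(2 + 4*α - 4*α^2 + 2*(1+α)*β))) :
    0 < σ₀ ∧ σ₀ ^ 2 < 1 + α ∧
      2 * σ₀ * √(6 * (α + 1) - 2 * σ₀ ^ 2) = σ₀ ^ 2 + 3 * β - 3 - 3 * α := by
  have hβ₀ : 0 ≤ β := hβ ▸ sqrt_nonneg _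
  have hβ₂ : β ^ 2 = 1 + 2 * α + 4 * α ^ 2 := hβ ▸ sq_sqrt (by positivity)
  set q := √(2 + 4*α - 4*α^2 + 2*(1+α)*β)
  set p := 5/3 + 5*α/3 - β/3 - (2/3) * q with hp
  obtain ⟨hp₀, hp₁, hkey₀, hkey⟩ := genHermite_sigma_sq_spec (q := q) (p := p) hα hβ₀ hβ₂
    (sqrt_nonneg _) (sq_sqrt (by nlinarith)) (by rw [hp]; ring)
  have hσ₀ : 0 < σ₀ := hσ ▸ sqrt_pos.2 hp₀
  have hσ₂ : σ₀ ^ 2 = p := hσ ▸ sq_sqrt hp₀.le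
  rw [← hσ₂] at hp₁ hkey₀ hkey
  refine ⟨hσ₀, hp₁, (sq_eq_sq₀ (by positivity) hkey₀).1 ?_⟩
  rw [mul_pow, sq_sqrt (by nlinarith), ← hkey]
  ring

theorem genHermite_endpoints_spec {α β σ₀ b : ℝ} (hα : 0 < α) (hβ : β = √(1 + 2 * α + 4 * α ^ 2))
    (hσ : σ₀ = √(5/3 + 5*α/3 - β/3 - (2/3) * √(2 + 4*α - 4*α^2 + 2*(1+α)*β)))
    (hb : b = (2/3) * (√(6*(α+1) - 2*σ₀^2) - σ₀/2)) :
    0 < σ₀ ∧ σ₀ < b ∧ 3 * (b ^ 2 + σ₀ ^ 2) + 2 * b * σ₀ = 8 * (1 + α) ∧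
      (σ₀ + b) * √(σ₀ * b) = 2 * α := by
  obtain ⟨hσ₀, hσ₁, hkey⟩ := genHermite_sigma_spec hα hβ hσ
  have hβ₂ : β ^ 2 = 1 + 2 * α + 4 * α ^ 2 := hβ ▸ sq_sqrt (by positivity)
  set w := √(6 * (α + 1) - 2 * σ₀ ^ 2)
  have hw : w ^ 2 = 6 * (α + 1) - 2 * σ₀ ^ 2 := sq_sqrt (by nlinarith)
  have hw₀ : 2 * σ₀ < w := lt_of_pow_lt_pow_left₀ 2 (sqrt_nonneg _) (by nlinarith)
  have hb' : 3 * b = 2 * w - σ₀ := by rw [hb]; ring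
  have hmoment : 3 * (b ^ 2 + σ₀ ^ 2) + 2 * b * σ₀ = 8 * (1 + α) := by
    linear_combination (b + σ₀ / 3 + 2 * w / 3) * hb' + (4 / 3) * hw
  have hprod : σ₀ * b = β - 1 - α := by linear_combination (σ₀ / 3) * hb' + hkey / 3
  have hsum : (σ₀ + b) ^ 2 = 4 * (1 + α + β) / 3 := by
    linear_combination hmoment / 3 + (4 / 3) * hprod
  refine ⟨hσ₀, by linarith, hmoment, ?_⟩
  have hb₀ : 0 < b := by linarith
  rw [← sqrt_sq (by positivity : 0 ≤ σ₀ + b), ← sqrt_mul (sq_nonneg _), hsum, hprod,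
    show 4 * (1 + α + β) / 3 * (β - 1 - α) = (2 * α) ^ 2 by linear_combination (4 / 3) * hβ₂,
    sqrt_sq (by positivity)]

/-- For `α > 0`, with the explicit constants `σ₀ < b`, the function
`f(x) = (1/π)√((b-x)(x-σ₀))(1 + (α/√(σ₀ b))(1/x))` is a probability density on
`[σ₀, b]`. -/
theorem genHermite_limit_density_a_zero
    (α : ℝ) (hα : 0 < α) (β σ₀ b : ℝ)
    (hβ : β = Real.sqrt (1 + 2*α + 4*α^2))
    (hσ : σ₀ = Real.sqrt (5/3 + 5*α/3 - β/3
      - (2/3) * Real.sqrt (2 + 4*α - 4*α^2 + 2*(1+α)*β)))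
    (hb : b = (2/3) * (Real.sqrt (6*(α+1) - 2*σ₀^2) - σ₀/2))
    (f : ℝ → ℝ)
    (hf : ∀ x, f x = (1/π) * Real.sqrt ((b - x)*(x - σ₀))
      * (1 + (α / Real.sqrt (σ₀ * b)) * (1/x))) :
    (∀ x ∈ Set.Icc σ₀ b, 0 ≤ f x) ∧ (∫ x in σ₀..b, f x) = 1 := by
  obtain ⟨hσ₀, hσb, hmoment, hmean⟩ := genHermite_endpoints_spec hα hβ hσ hb
  obtain rfl : f = genHermiteDensity α σ₀ b := funext hf
  exact ⟨fun x hx => genHermiteDensity_nonneg hα.le hσ₀ hx.1,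
    integral_genHermiteDensity hσ₀ hσb hmoment hmean⟩
end

section
/- For σ = a = 0 one has b = (2/3)√6 and the density f(x) = (1/(2π))√((b-x)/x)·(2x + b) is a probability density on [0, b], i.e. f ≥ 0 on (0,b) and ∫_0^b f(x) dx = 1. -/
open MeasureTheory Real

/-!
The substitution `x = b (1 + sin t) / 2` makes `∫ √((b - x) / x) (2x + b) dx` elementary and
yields the explicit primitive `halfRangeWeightPrimitive`. Its increase over `[0, b]` is
`3πb² / 4`, which equals `2π` exactly when `b² = 8 / 3`. Integrability near the singularity at
`0` comes for free, since the integrand is a nonnegative derivative.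
-/

noncomputable def halfRangeWeight (b x : ℝ) : ℝ := √((b - x) / x) * (2 * x + b)

noncomputable def halfRangeWeightPrimitive (b x : ℝ) : ℝ :=
  (x + b / 2) * √(x * (b - x)) + 3 * b ^ 2 / 4 * arcsin ((2 * x - b) / b)

lemma halfRangeWeight_nonneg {b x : ℝ} (hx : x ∈ Set.Icc 0 b) : 0 ≤ halfRangeWeight b x :=
  mul_nonneg (sqrt_nonneg _) (by linarith [hx.1, hx.2])

lemma continuous_halfRangeWeightPrimitive (b : ℝ) : Continuous (halfRangeWeightPrimitive b) := by
  unfold halfRangeWeightPrimitive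
  fun_prop

lemma hasDerivAt_halfRangeWeightPrimitive {b x : ℝ} (hx : x ∈ Set.Ioo 0 b) :
    HasDerivAt (halfRangeWeightPrimitive b) (halfRangeWeight b x) x := by
  obtain ⟨hx0, hxb⟩ := hx
  have hb : 0 < b := hx0.trans hxb
  have hq : 0 < x * (b - x) := mul_pos hx0 (by linarith)
  set s := √(x * (b - x))
  have hs : 0 < s := sqrt_pos.mpr hq
  have hs2 : s ^ 2 = x * (b - x) := sq_sqrt hq.le
  have hsqrt_cos : √(1 - ((2 * x - b) / b) ^ 2) = 2 * s / b := by
    rw [← sqrt_sq (by positivity : 0 ≤ 2 * s / b)]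
    congr 1
    field_simp
    linear_combination (-4 : ℝ) * hs2
  have hsqrt_weight : √((b - x) / x) = s / x := by
    rw [← sqrt_sq (by positivity : 0 ≤ s / x)]
    congr 1
    field_simp
    linear_combination (-1 : ℝ) * hs2
  have hlin : HasDerivAt (fun y => (2 * y - b) / b) (2 / b) x := by
    simpa using (((hasDerivAt_id x).const_mul 2).sub_const b).div_const b
  have hy : (2 * x - b) / b ∈ Set.Ioo (-1) 1 :=
    ⟨by rw [lt_div_iff₀ hb]; linarith, by rw [div_lt_iff₀ hb]; linarith⟩
  have harcsin := (hasDerivAt_arcsin hy.1.ne' hy.2.ne).comp x hlin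
  have hquad : HasDerivAt (fun y => y * (b - y)) (b - 2 * x) x :=
    ((hasDerivAt_id' x).mul ((hasDerivAt_id' x).const_sub b)).congr_deriv (by ring)
  have hderiv : HasDerivAt (halfRangeWeightPrimitive b)
      (1 * s + (x + b / 2) * ((b - 2 * x) / (2 * s)) +
        3 * b ^ 2 / 4 * (1 / √(1 - ((2 * x - b) / b) ^ 2) * (2 / b))) x :=
    (((hasDerivAt_id' x).add_const (b / 2)).mul (hquad.sqrt hq.ne')).add
      (harcsin.const_mul (3 * b ^ 2 / 4))
  refine hderiv.congr_deriv ?_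
  rw [hsqrt_cos, halfRangeWeight, hsqrt_weight]
  field_simp
  linear_combination (-16 * (x + b)) * hs2

theorem integral_halfRangeWeight {b : ℝ} (hb : 0 ≤ b) :
    ∫ x in (0 : ℝ)..b, halfRangeWeight b x = 3 * π * b ^ 2 / 4 := by
  rcases hb.eq_or_lt with rfl | hb_pos
  · simp
  have hcont := (continuous_halfRangeWeightPrimitive b).continuousOn (s := Set.Icc 0 b)
  have hderiv := fun x (hx : x ∈ Set.Ioo 0 b) => hasDerivAt_halfRangeWeightPrimitive hx
  have hint : IntervalIntegrable (halfRangeWeight b) volume 0 b :=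
    (intervalIntegrable_iff_integrableOn_Ioc_of_le hb_pos.le).mpr <|
      intervalIntegral.integrableOn_deriv_of_nonneg hcont hderiv fun x hx =>
        halfRangeWeight_nonneg (Set.Ioo_subset_Icc_self hx)
  rw [intervalIntegral.integral_eq_sub_of_hasDerivAt_of_le hb_pos.le hcont hderiv hint]
  have h_right : halfRangeWeightPrimitive b b = 3 * π * b ^ 2 / 8 := by
    simp only [halfRangeWeightPrimitive, sub_self, mul_zero, sqrt_zero, two_mul,
      add_sub_cancel_right, div_self hb_pos.ne', arcsin_one]
    ring
  have h_left : halfRangeWeightPrimitive b 0 = -(3 * π * b ^ 2 / 8) := by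
    simp only [halfRangeWeightPrimitive, zero_mul, mul_zero, sqrt_zero, zero_sub, neg_div,
      div_self hb_pos.ne', arcsin_neg_one]
    ring
  rw [h_right, h_left]
  ring

/-- For `σ = a = 0` one has `b = (2/3)√6` and
`f(x) = (1/(2π))√((b-x)/x)(2x + b)` is a probability density on `[0, b]`. -/
theorem halfRange_hermite_limit_density_zero
    (b : ℝ) (hb : b = (2/3) * Real.sqrt 6)
    (f : ℝ → ℝ)
    (hf : ∀ x, f x = (1/(2*π)) * Real.sqrt ((b - x)/x) * (2*x + b)) :
    (∀ x ∈ Set.Ioo (0:ℝ) b, 0 ≤ f x) ∧ (∫ x in (0:ℝ)..b, f x) = 1 := by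
  have hf' : f = fun x => (2 * π)⁻¹ * halfRangeWeight b x := by
    ext x; rw [hf, halfRangeWeight]; ring
  have hb0 : 0 ≤ b := by rw [hb]; positivity
  have hb2 : b ^ 2 = 8 / 3 := by
    rw [hb, mul_pow, sq_sqrt (by norm_num : (0:ℝ) ≤ 6)]; norm_num
  subst hf'
  refine ⟨fun x hx => mul_nonneg (by positivity)
    (halfRangeWeight_nonneg (Set.Ioo_subset_Icc_self hx)), ?_⟩
  rw [intervalIntegral.integral_const_mul, integral_halfRangeWeight hb0, hb2]
  field_simp
  ring
end

section
/- For α > 0 and σ > 0, suppose b > σ satisfies σb - α ≥ 0 and b²/2 + ασ/b - σ²/2 - α - 1 = 0. Then f(x) = (1/(π|x|))√((b²-x²)/(x²-σ²))·(x² - ασ/b) is a probability density on [-b,-σ] ∪ [σ,b]: it is nonnegative there and integrates to 1. -/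
/-!
The density has an explicit primitive `F` on `[σ, b]`, built from `√((b² - x²)(x² - σ²))` and two
arcsines, with `F b - F σ = (b² - σ²)/4 + ασ/(2b) - α/2`; the constraint on `b` makes this exactly
`1/2`. Nonnegativity (`x² ≥ σ² ≥ ασ/b`) makes the density integrable, so the fundamental theorem of
calculus applies, and by evenness `[-b, -σ]` carries the other half.
-/

open MeasureTheory Real Set

theorem integrableOn_Icc_and_integral_eq_sub_of_hasDerivAt_of_nonneg {f F : ℝ → ℝ} {a b : ℝ}
    (hab : a ≤ b) (hF : ContinuousOn F (Icc a b))
    (hderiv : ∀ x ∈ Ioo a b, HasDerivAt F (f x) x) (hf : ∀ x ∈ Ioo a b, 0 ≤ f x) :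
    IntegrableOn f (Icc a b) ∧ ∫ x in Icc a b, f x = F b - F a := by
  have hint : IntegrableOn f (Ioc a b) := intervalIntegral.integrableOn_deriv_of_nonneg hF hderiv hf
  refine ⟨(integrableOn_Icc_iff_integrableOn_Ioc).mpr hint, ?_⟩
  rw [integral_Icc_eq_integral_Ioc, ← intervalIntegral.integral_of_le hab]
  exact intervalIntegral.integral_eq_sub_of_hasDerivAt_of_le hab hF hderiv
    ((intervalIntegrable_iff_integrableOn_Ioc_of_le hab).mpr hint)

theorem setIntegral_Icc_neg_union_Icc_of_even {f : ℝ → ℝ} (heven : ∀ x, f (-x) = f x)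
    {a b : ℝ} (ha : 0 < a) (hab : a ≤ b) (hf : IntegrableOn f (Icc a b)) :
    ∫ x in Icc (-b) (-a) ∪ Icc a b, f x = 2 * ∫ x in Icc a b, f x := by
  have hii : IntervalIntegrable f volume a b :=
    (intervalIntegrable_iff_integrableOn_Icc_of_le hab).mpr hf
  have hii_neg : IntervalIntegrable f volume (-b) (-a) := by
    simpa [heven] using ((IntervalIntegrable.iff_comp_neg).mp hii).symm
  have hneg : ∫ x in Icc (-b) (-a), f x = ∫ x in Icc a b, f x := by
    rw [integral_Icc_eq_integral_Ioc, integral_Icc_eq_integral_Ioc,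
      ← intervalIntegral.integral_of_le (neg_le_neg hab), ← intervalIntegral.integral_of_le hab,
      ← intervalIntegral.integral_comp_neg]
    simp only [heven]
  have hdisj : Disjoint (Icc (-b) (-a)) (Icc a b) :=
    disjoint_left.mpr fun x hx hx' ↦ by linarith [hx.2, hx'.1]
  rw [setIntegral_union hdisj measurableSet_Icc
    ((intervalIntegrable_iff_integrableOn_Icc_of_le (neg_le_neg hab)).mp hii_neg) hf, hneg, two_mul]

theorem hasDerivAt_sqrt_mul_sub_sq {σ b x : ℝ} (hP : 0 < b ^ 2 - x ^ 2) (hQ : 0 < x ^ 2 - σ ^ 2) :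
    HasDerivAt (fun y ↦ √((b ^ 2 - y ^ 2) * (y ^ 2 - σ ^ 2)))
      (x * ((b ^ 2 - x ^ 2) - (x ^ 2 - σ ^ 2)) / (√(b ^ 2 - x ^ 2) * √(x ^ 2 - σ ^ 2))) x := by
  have hP' : HasDerivAt (fun y : ℝ ↦ b ^ 2 - y ^ 2) (-(2 * x)) x := by
    simpa using (hasDerivAt_pow 2 x).const_sub (b ^ 2)
  have hQ' : HasDerivAt (fun y : ℝ ↦ y ^ 2 - σ ^ 2) (2 * x) x := by
    simpa using (hasDerivAt_pow 2 x).sub_const (σ ^ 2)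
  refine (hP'.fun_mul hQ').sqrt (by positivity) |>.congr_deriv ?_
  rw [sqrt_mul hP.le]
  field_simp
  ring

theorem hasDerivAt_sqrt_sub_sq_div {b c x : ℝ} (hP : b ^ 2 - x ^ 2 ≠ 0) (hc : c ≠ 0) :
    HasDerivAt (fun y ↦ √((b ^ 2 - y ^ 2) / c))
      (-(2 * x) / c / (2 * √((b ^ 2 - x ^ 2) / c))) x := by
  have : HasDerivAt (fun y : ℝ ↦ b ^ 2 - y ^ 2) (-(2 * x)) x := by
    simpa using (hasDerivAt_pow 2 x).const_sub (b ^ 2)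
  exact (this.div_const c).sqrt (div_ne_zero hP hc)

theorem hasDerivAt_arcsin_sqrt_div {σ b x : ℝ} (hP : 0 < b ^ 2 - x ^ 2) (hQ : 0 < x ^ 2 - σ ^ 2) :
    HasDerivAt (fun y ↦ arcsin √((b ^ 2 - y ^ 2) / (b ^ 2 - σ ^ 2)))
      (-(x / (√(b ^ 2 - x ^ 2) * √(x ^ 2 - σ ^ 2)))) x := by
  have hD : 0 < b ^ 2 - σ ^ 2 := by linarith
  have hu_lt : √((b ^ 2 - x ^ 2) / (b ^ 2 - σ ^ 2)) < 1 :=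
    (sqrt_lt' one_pos).mpr (by rw [one_pow, div_lt_one hD]; linarith)
  refine ((hasDerivAt_arcsin (by linarith [sqrt_nonneg ((b ^ 2 - x ^ 2) / (b ^ 2 - σ ^ 2))])
    hu_lt.ne).comp x (hasDerivAt_sqrt_sub_sq_div hP.ne' hD.ne')).congr_deriv ?_
  rw [sq_sqrt (by positivity), one_sub_div hD.ne', sqrt_div hP.le, sqrt_div (by linarith),
    show b ^ 2 - σ ^ 2 - (b ^ 2 - x ^ 2) = x ^ 2 - σ ^ 2 by ring]
  field_simp
  rw [sq_sqrt hD.le]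

theorem hasDerivAt_arcsin_div_mul_sqrt_div {σ b x : ℝ} (hσ : 0 < σ) (hσx : σ < x) (hxb : x < b) :
    HasDerivAt (fun y ↦ arcsin (σ / y * √((b ^ 2 - y ^ 2) / (b ^ 2 - σ ^ 2))))
      (-(σ * b / (x * (√(b ^ 2 - x ^ 2) * √(x ^ 2 - σ ^ 2))))) x := by
  have hx : 0 < x := hσ.trans hσx
  have hb : 0 < b := hx.trans hxb
  have hP : 0 < b ^ 2 - x ^ 2 := by nlinarith
  have hQ : 0 < x ^ 2 - σ ^ 2 := by nlinarith
  have hD : 0 < b ^ 2 - σ ^ 2 := by linarith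
  have hinv : HasDerivAt (fun y : ℝ ↦ σ / y) (-(σ / x ^ 2)) x := by
    have := (hasDerivAt_const x σ).fun_div (hasDerivAt_id x) hx.ne'
    simpa [neg_div] using this
  set v := σ / x * √((b ^ 2 - x ^ 2) / (b ^ 2 - σ ^ 2)) with hv
  have hv_sq : v ^ 2 = σ ^ 2 * (b ^ 2 - x ^ 2) / (x ^ 2 * (b ^ 2 - σ ^ 2)) := by
    rw [hv, mul_pow, div_pow, sq_sqrt (by positivity)]
    field_simp
  have hv_lt : v < 1 := by
    have : v ^ 2 < 1 := by
      rw [hv_sq, div_lt_one (by positivity)]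
      nlinarith
    nlinarith [show 0 ≤ v by positivity]
  have h_one_sub : √(1 - v ^ 2) = b * √(x ^ 2 - σ ^ 2) / (x * √(b ^ 2 - σ ^ 2)) := by
    rw [← sqrt_sq (by positivity : 0 ≤ b * √(x ^ 2 - σ ^ 2) / (x * √(b ^ 2 - σ ^ 2)))]
    congr 1
    rw [hv_sq, div_pow, mul_pow, mul_pow, sq_sqrt hQ.le, sq_sqrt hD.le]
    field_simp
    ring
  refine ((hasDerivAt_arcsin (by linarith [show 0 ≤ v by positivity]) hv_lt.ne).comp x
    (hinv.fun_mul (hasDerivAt_sqrt_sub_sq_div hP.ne' hD.ne'))).congr_deriv ?_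
  rw [h_one_sub, sqrt_div hP.le]
  field_simp
  linear_combination -(b ^ 2 - σ ^ 2) * sq_sqrt hP.le - x ^ 2 * sq_sqrt hD.le

noncomputable def truncHermiteDensity (α σ b x : ℝ) : ℝ :=
  1 / (π * |x|) * √((b ^ 2 - x ^ 2) / (x ^ 2 - σ ^ 2)) * (x ^ 2 - α * σ / b)

noncomputable def truncHermitePrimitive (α σ b x : ℝ) : ℝ :=
  √((b ^ 2 - x ^ 2) * (x ^ 2 - σ ^ 2)) / (2 * π)
    - ((b ^ 2 - σ ^ 2) / (2 * π) + α * σ / (b * π)) * arcsin √((b ^ 2 - x ^ 2) / (b ^ 2 - σ ^ 2))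
    + α / π * arcsin (σ / x * √((b ^ 2 - x ^ 2) / (b ^ 2 - σ ^ 2)))

section truncHermite

variable {α σ b : ℝ}

theorem truncHermiteDensity_neg (x : ℝ) :
    truncHermiteDensity α σ b (-x) = truncHermiteDensity α σ b x := by
  simp only [truncHermiteDensity, abs_neg, neg_sq]

theorem truncHermiteDensity_nonneg (hσ : 0 ≤ σ) (hb : 0 < b) (hαb : α ≤ σ * b) {x : ℝ}
    (hx : σ ^ 2 ≤ x ^ 2) : 0 ≤ truncHermiteDensity α σ b x := by
  have hratio : α * σ / b ≤ σ ^ 2 := by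
    rw [div_le_iff₀ hb]
    nlinarith
  unfold truncHermiteDensity
  have := sub_nonneg.mpr (hratio.trans hx)
  positivity

theorem hasDerivAt_truncHermitePrimitive (hσ : 0 < σ) {x : ℝ} (hσx : σ < x) (hxb : x < b) :
    HasDerivAt (truncHermitePrimitive α σ b) (truncHermiteDensity α σ b x) x := by
  have hx : 0 < x := hσ.trans hσx
  have hb : 0 < b := hx.trans hxb
  have hP : 0 < b ^ 2 - x ^ 2 := by nlinarith
  have hQ : 0 < x ^ 2 - σ ^ 2 := by nlinarith
  refine ((((hasDerivAt_sqrt_mul_sub_sq hP hQ).div_const (2 * π)).sub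
    ((hasDerivAt_arcsin_sqrt_div hP hQ).const_mul _)).add
    ((hasDerivAt_arcsin_div_mul_sqrt_div hσ hσx hxb).const_mul (α / π))).congr_deriv ?_
  rw [truncHermiteDensity, abs_of_pos hx, sqrt_div hP.le]
  field_simp
  linear_combination (2 * σ * α - 2 * b * x ^ 2) * sq_sqrt hP.le

theorem continuousOn_truncHermitePrimitive (hσ : 0 < σ) :
    ContinuousOn (truncHermitePrimitive α σ b) (Icc σ b) := by
  have hx : ∀ x ∈ Icc σ b, x ≠ 0 := fun x hx ↦ (hσ.trans_le hx.1).ne'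
  unfold truncHermitePrimitive
  fun_prop (disch := assumption)

theorem truncHermitePrimitive_right : truncHermitePrimitive α σ b b = 0 := by
  simp [truncHermitePrimitive]

theorem truncHermitePrimitive_left (hσ : 0 < σ) (hσb : σ < b) :
    truncHermitePrimitive α σ b σ = α / 2 - (b ^ 2 - σ ^ 2) / 4 - α * σ / (2 * b) := by
  have hD : b ^ 2 - σ ^ 2 ≠ 0 := by nlinarith
  have hb : b ≠ 0 := (hσ.trans hσb).ne'
  rw [truncHermitePrimitive, div_self hD, sqrt_one, div_self hσ.ne', one_mul, arcsin_one, sub_self,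
    mul_zero, sqrt_zero]
  field_simp
  ring

end truncHermite

theorem truncated_symmetric_genHermite_limit_density_general
    (α σ b : ℝ) (hσ : 0 < σ) (hbσ : σ < b)
    (h1 : 0 ≤ σ*b - α)
    (h2 : b^2/2 + α*σ/b - σ^2/2 - α - 1 = 0)
    (f : ℝ → ℝ)
    (hf : ∀ x, f x = (1/(π*|x|)) * Real.sqrt ((b^2 - x^2)/(x^2 - σ^2))
      * (x^2 - α*σ/b)) :
    (∀ x ∈ Set.Icc (-b) (-σ) ∪ Set.Icc σ b, 0 ≤ f x) ∧
    (∫ x in Set.Icc (-b) (-σ) ∪ Set.Icc σ b, f x) = 1 := by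
  obtain rfl : f = truncHermiteDensity α σ b := funext hf
  have hb : 0 < b := hσ.trans hbσ
  have hnonneg : ∀ x ∈ Icc (-b) (-σ) ∪ Icc σ b, 0 ≤ truncHermiteDensity α σ b x := by
    refine fun x hx ↦ truncHermiteDensity_nonneg hσ.le hb (sub_nonneg.mp h1) ?_
    rcases hx with ⟨-, hx⟩ | ⟨hx, -⟩ <;> nlinarith
  obtain ⟨hint, hval⟩ := integrableOn_Icc_and_integral_eq_sub_of_hasDerivAt_of_nonneg hbσ.le
    (continuousOn_truncHermitePrimitive hσ)
    (fun x hx ↦ hasDerivAt_truncHermitePrimitive hσ hx.1 hx.2)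
    (fun x hx ↦ hnonneg x (Or.inr (Ioo_subset_Icc_self hx)))
  refine ⟨hnonneg, ?_⟩
  rw [setIntegral_Icc_neg_union_Icc_of_even truncHermiteDensity_neg hσ hbσ.le hint, hval,
    truncHermitePrimitive_right, truncHermitePrimitive_left hσ hbσ]
  field_simp at h2 ⊢
  linear_combination 2 * h2

/-- For `α > 0`, `σ > 0`, if `b > σ` satisfies `σb - α ≥ 0` and
`b²/2 + ασ/b - σ²/2 - α - 1 = 0`, then
`f(x) = (1/(π|x|))√((b²-x²)/(x²-σ²))(x² - ασ/b)` is a probability density on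
`[-b,-σ] ∪ [σ,b]`. -/
theorem truncated_symmetric_genHermite_limit_density
    (α σ b : ℝ) (hα : 0 < α) (hσ : 0 < σ) (hbσ : σ < b)
    (h1 : 0 ≤ σ*b - α)
    (h2 : b^2/2 + α*σ/b - σ^2/2 - α - 1 = 0)
    (f : ℝ → ℝ)
    (hf : ∀ x, f x = (1/(π*|x|)) * Real.sqrt ((b^2 - x^2)/(x^2 - σ^2))
      * (x^2 - α*σ/b)) :
    (∀ x ∈ Set.Icc (-b) (-σ) ∪ Set.Icc σ b, 0 ≤ f x) ∧
    (∫ x in Set.Icc (-b) (-σ) ∪ Set.Icc σ b, f x) = 1 :=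
  truncated_symmetric_genHermite_limit_density_general α σ b hσ hbσ h1 h2 f hf
end

section
/- For α > 0, set b₀ = √(1 + α + √(1+2α)) and σ₀ = √(1 + α - √(1+2α)). Then 0 < σ₀ < b₀, b₀² σ₀² = α², b₀² + σ₀² = 2(1+α), and the function f(x) = (1/(π|x|))√((b₀²-x²)(x²-σ₀²)) is a probability density on [-b₀,-σ₀] ∪ [σ₀, b₀]. -/
/-!
On `[a, b]` with `0 < a`, the function `√((b² - x²)(x² - a²)) / x` has an explicit primitive
built from one square root and two arcsines (substitute `t = x²` and complete squares), whose
endpoint values give `∫ₐᵇ √((b² - x²)(x² - a²)) / x dx = π (b - a)² / 4`. By evenness the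
density integrates to `(b₀ - σ₀)² / 2`, and `(b₀ - σ₀)² = b₀² + σ₀² - 2 b₀ σ₀ = 2(1 + α) - 2α = 2`.
-/

open MeasureTheory Real Set

lemma HasDerivAt.arcsin_of_one_sub_sq_eq_s9 {u : ℝ → ℝ} {u' s x : ℝ} (hu : HasDerivAt u u' x)
    (hs : 0 < s) (hsq : 1 - u x ^ 2 = s ^ 2) :
    HasDerivAt (fun y => arcsin (u y)) (u' / s) x := by
  have hlt : u x ^ 2 < 1 := by nlinarith
  have hne_neg : u x ≠ -1 := by rintro h; rw [h] at hlt; norm_num at hlt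
  have hne_one : u x ≠ 1 := by rintro h; rw [h] at hlt; norm_num at hlt
  have h := (hasDerivAt_arcsin hne_neg hne_one).comp x hu
  rwa [hsq, sqrt_sq hs.le, one_div_mul_eq_div] at h

noncomputable def sqrtBandPrimitive (a b x : ℝ) : ℝ :=
  √((b ^ 2 - x ^ 2) * (x ^ 2 - a ^ 2))
    + (a ^ 2 + b ^ 2) / 2 * arcsin ((2 * x ^ 2 - a ^ 2 - b ^ 2) / (b ^ 2 - a ^ 2))
    - a * b * arcsin (((a ^ 2 + b ^ 2) * x ^ 2 - 2 * a ^ 2 * b ^ 2) / ((b ^ 2 - a ^ 2) * x ^ 2))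

section
variable {a b x : ℝ}

lemma hasDerivAt_sqrtBandPrimitive (ha : 0 < a) (hax : a < x) (hxb : x < b) :
    HasDerivAt (sqrtBandPrimitive a b) (2 * (√((b ^ 2 - x ^ 2) * (x ^ 2 - a ^ 2)) / x)) x := by
  set P := (b ^ 2 - x ^ 2) * (x ^ 2 - a ^ 2)
  have hx : 0 < x := ha.trans hax
  have hPpos : 0 < P := mul_pos (by nlinarith) (by nlinarith)
  have hS : 0 < √P := sqrt_pos.mpr hPpos
  have hS2 : √P ^ 2 = P := sq_sqrt hPpos.le
  have hb : 0 < b := hx.trans hxb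
  have hd : 0 < b ^ 2 - a ^ 2 := by nlinarith
  have hsq : HasDerivAt (fun y => y ^ 2) (2 * x) x := by simpa using hasDerivAt_pow 2 x
  have h₁ : HasDerivAt (fun y => √((b ^ 2 - y ^ 2) * (y ^ 2 - a ^ 2)))
      ((-(2 * x) * (x ^ 2 - a ^ 2) + (b ^ 2 - x ^ 2) * (2 * x)) / (2 * √P)) x :=
    ((hsq.const_sub _).mul (hsq.sub_const _)).sqrt hPpos.ne'
  have h₂ := (((hsq.const_mul 2).sub_const (a ^ 2) |>.sub_const (b ^ 2)).div_const
    (b ^ 2 - a ^ 2)).arcsin_of_one_sub_sq_eq_s9 (s := 2 * √P / (b ^ 2 - a ^ 2)) (by positivity)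
    (by field_simp; rw [hS2]; ring)
  have hw : HasDerivAt (fun y => ((a ^ 2 + b ^ 2) * y ^ 2 - 2 * a ^ 2 * b ^ 2) /
      ((b ^ 2 - a ^ 2) * y ^ 2)) _ x :=
    ((hsq.const_mul (a ^ 2 + b ^ 2)).sub_const (2 * a ^ 2 * b ^ 2)).div
      (hsq.const_mul (b ^ 2 - a ^ 2)) (by positivity)
  have h₃ := hw.arcsin_of_one_sub_sq_eq_s9 (s := 2 * a * b * √P / ((b ^ 2 - a ^ 2) * x ^ 2))
    (by positivity) (by field_simp; rw [hS2]; ring)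
  refine ((h₁.add (h₂.const_mul ((a ^ 2 + b ^ 2) / 2))).sub (h₃.const_mul (a * b))).congr_deriv ?_
  field_simp
  rw [hS2]
  ring

lemma sqrtBandPrimitive_right (hb : b ≠ 0) (hab : a ^ 2 ≠ b ^ 2) :
    sqrtBandPrimitive a b b = π / 4 * (b - a) ^ 2 := by
  have hd : b ^ 2 - a ^ 2 ≠ 0 := sub_ne_zero.mpr hab.symm
  have h₁ : (2 * b ^ 2 - a ^ 2 - b ^ 2) / (b ^ 2 - a ^ 2) = 1 := by field_simp; ring
  have h₂ : ((a ^ 2 + b ^ 2) * b ^ 2 - 2 * a ^ 2 * b ^ 2) / ((b ^ 2 - a ^ 2) * b ^ 2) = 1 := by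
    field_simp; ring
  rw [sqrtBandPrimitive, h₁, h₂, arcsin_one, sub_self, zero_mul, sqrt_zero]
  ring

lemma sqrtBandPrimitive_left (ha : a ≠ 0) (hab : a ^ 2 ≠ b ^ 2) :
    sqrtBandPrimitive a b a = -(π / 4 * (b - a) ^ 2) := by
  have hd : b ^ 2 - a ^ 2 ≠ 0 := sub_ne_zero.mpr hab.symm
  have h₁ : (2 * a ^ 2 - a ^ 2 - b ^ 2) / (b ^ 2 - a ^ 2) = -1 := by field_simp; ring
  have h₂ : ((a ^ 2 + b ^ 2) * a ^ 2 - 2 * a ^ 2 * b ^ 2) / ((b ^ 2 - a ^ 2) * a ^ 2) = -1 := by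
    field_simp; ring
  rw [sqrtBandPrimitive, h₁, h₂, arcsin_neg_one, sub_self, mul_zero, sqrt_zero]
  ring

lemma continuousOn_sqrtBandPrimitive (hab : a ^ 2 ≠ b ^ 2) :
    ContinuousOn (sqrtBandPrimitive a b) {x | x ≠ 0} := by
  have hd : b ^ 2 - a ^ 2 ≠ 0 := sub_ne_zero.mpr hab.symm
  have hx : ∀ x ∈ {x : ℝ | x ≠ 0}, (b ^ 2 - a ^ 2) * x ^ 2 ≠ 0 := fun x hx ↦
    mul_ne_zero hd (pow_ne_zero 2 hx)
  unfold sqrtBandPrimitive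
  fun_prop (disch := assumption)

lemma integral_sqrt_band_div (ha : 0 < a) (hab : a < b) :
    ∫ x in a..b, √((b ^ 2 - x ^ 2) * (x ^ 2 - a ^ 2)) / x = π / 4 * (b - a) ^ 2 := by
  have hpos : Icc a b ⊆ {x | x ≠ 0} := fun x hx ↦ (ha.trans_le hx.1).ne'
  have hab₂ : a ^ 2 ≠ b ^ 2 := (pow_lt_pow_left₀ hab ha.le two_ne_zero).ne
  have hcont : ContinuousOn (fun x ↦ √((b ^ 2 - x ^ 2) * (x ^ 2 - a ^ 2)) / x) (uIcc a b) := by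
    rw [uIcc_of_le hab.le]
    exact ContinuousOn.div (by fun_prop) continuousOn_id fun x hx ↦ hpos hx
  have hFTC := intervalIntegral.integral_eq_sub_of_hasDeriv_right_of_le hab.le
    ((continuousOn_sqrtBandPrimitive hab₂).mono hpos)
    (fun x hx ↦ (hasDerivAt_sqrtBandPrimitive ha hx.1 hx.2).hasDerivWithinAt)
    (hcont.intervalIntegrable.const_mul 2)
  rw [intervalIntegral.integral_const_mul, sqrtBandPrimitive_right (ha.trans hab).ne' hab₂,
    sqrtBandPrimitive_left ha.ne' hab₂] at hFTC
  linarith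

end

lemma integral_Icc_neg_union_Icc_of_even {f : ℝ → ℝ} {a b : ℝ} (heven : ∀ x, f (-x) = f x)
    (ha : 0 < a) (hab : a ≤ b) (hf : IntegrableOn f (Icc (-b) (-a) ∪ Icc a b)) :
    ∫ x in Icc (-b) (-a) ∪ Icc a b, f x = 2 * ∫ x in a..b, f x := by
  have hdisj : Disjoint (Icc (-b) (-a)) (Icc a b) :=
    disjoint_left.mpr fun x hx₁ hx₂ ↦ by linarith [hx₁.2, hx₂.1]
  have hneg : ∫ x in Icc (-b) (-a), f x = ∫ x in a..b, f x := by
    rw [integral_Icc_eq_integral_Ioc, ← intervalIntegral.integral_of_le (neg_le_neg hab),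
      ← intervalIntegral.integral_comp_neg]
    simp only [heven]
  rw [setIntegral_union hdisj measurableSet_Icc hf.left_of_union hf.right_of_union, hneg,
    integral_Icc_eq_integral_Ioc, ← intervalIntegral.integral_of_le hab, two_mul]

lemma integral_band_density {a b : ℝ} (ha : 0 < a) (hab : a < b) :
    ∫ x in Icc (-b) (-a) ∪ Icc a b, 1 / (π * |x|) * √((b ^ 2 - x ^ 2) * (x ^ 2 - a ^ 2))
      = (b - a) ^ 2 / 2 := by
  have hne : Icc (-b) (-a) ∪ Icc a b ⊆ {x | x ≠ 0} := by
    rintro x (hx | hx) hx0 <;> linarith [hx.1, hx.2]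
  have hint : IntegrableOn (fun x ↦ 1 / (π * |x|) * √((b ^ 2 - x ^ 2) * (x ^ 2 - a ^ 2)))
      (Icc (-b) (-a) ∪ Icc a b) := by
    refine ContinuousOn.integrableOn_compact (isCompact_Icc.union isCompact_Icc) ?_
    exact ContinuousOn.mul (continuousOn_const.div (by fun_prop)
      fun x hx ↦ mul_ne_zero pi_ne_zero (abs_ne_zero.mpr (hne hx))) (by fun_prop)
  have hpos : ∫ x in a..b, 1 / (π * |x|) * √((b ^ 2 - x ^ 2) * (x ^ 2 - a ^ 2))
      = π⁻¹ * ∫ x in a..b, √((b ^ 2 - x ^ 2) * (x ^ 2 - a ^ 2)) / x := by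
    rw [← intervalIntegral.integral_const_mul]
    refine intervalIntegral.integral_congr fun x hx ↦ ?_
    rw [uIcc_of_le hab.le] at hx
    rw [abs_of_pos (ha.trans_le hx.1)]
    simp only [mul_inv, div_eq_mul_inv]
    ring
  rw [integral_Icc_neg_union_Icc_of_even (fun x ↦ by simp only [abs_neg, even_two.neg_pow])
    ha hab.le hint, hpos, integral_sqrt_band_div ha hab]
  field_simp
  ring

/-- For `α > 0`, with `b₀ = √(1+α+√(1+2α))` and
`σ₀ = √(1+α-√(1+2α))`, one has `0 < σ₀ < b₀`, `b₀²σ₀² = α²`,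
`b₀² + σ₀² = 2(1+α)`, and `f(x) = (1/(π|x|))√((b₀²-x²)(x²-σ₀²))` is a
probability density on `[-b₀,-σ₀] ∪ [σ₀,b₀]`. -/
theorem symmetric_genHermite_limit_density
    (α b₀ σ₀ : ℝ) (hα : 0 < α)
    (hb : b₀ = Real.sqrt (1 + α + Real.sqrt (1 + 2*α)))
    (hσ : σ₀ = Real.sqrt (1 + α - Real.sqrt (1 + 2*α)))
    (f : ℝ → ℝ)
    (hf : ∀ x, f x = (1/(π*|x|)) * Real.sqrt ((b₀^2 - x^2)*(x^2 - σ₀^2))) :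
    0 < σ₀ ∧ σ₀ < b₀ ∧ b₀^2 * σ₀^2 = α^2 ∧ b₀^2 + σ₀^2 = 2*(1+α) ∧
    (∀ x ∈ Set.Icc (-b₀) (-σ₀) ∪ Set.Icc σ₀ b₀, 0 ≤ f x) ∧
    (∫ x in Set.Icc (-b₀) (-σ₀) ∪ Set.Icc σ₀ b₀, f x) = 1 := by
  obtain rfl : f = _ := funext hf
  set R := √(1 + 2 * α)
  have hR : R ^ 2 = 1 + 2 * α := sq_sqrt (by linarith)
  have hR_pos : 0 < R := sqrt_pos.mpr (by linarith)
  have hR_lt : R < 1 + α := by nlinarith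
  have hb₀ : b₀ ^ 2 = 1 + α + R := hb ▸ sq_sqrt (by positivity)
  have hσ₀ : σ₀ ^ 2 = 1 + α - R := hσ ▸ sq_sqrt (by linarith)
  have hσ_pos : 0 < σ₀ := hσ ▸ sqrt_pos.mpr (by linarith)
  have hσb : σ₀ < b₀ := hb ▸ hσ ▸ sqrt_lt_sqrt (by linarith) (by linarith)
  have hprod : b₀ ^ 2 * σ₀ ^ 2 = α ^ 2 := by rw [hb₀, hσ₀]; linear_combination -hR
  have hbσ : b₀ * σ₀ = α :=
    (pow_left_inj₀ (mul_pos (hσ_pos.trans hσb) hσ_pos).le hα.le two_ne_zero).mp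
      (by rw [mul_pow, hprod])
  refine ⟨hσ_pos, hσb, hprod, by rw [hb₀, hσ₀]; ring, fun x _ ↦ by positivity, ?_⟩
  rw [integral_band_density hσ_pos hσb]
  linear_combination (hb₀ + hσ₀ - 2 * hbσ) / 2
end
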